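/- arXiv:2303.02780 — 5 statements merged into one kernel-verified Lean document; each statement's English description precedes it below -/
import Mathlib

section
/- Let P be a nonconstant polynomial over ℂ with factorization P = C·∏ᵢ₌₁ʳ (X − rᵢ)^{mᵢ}, where C ≠ 0, the rᵢ are pairwise distinct complex numbers and mᵢ ≥ 1. Define the sequence τ₀ = P and τ_k = gcd(τ_{k−1}, τ_{k−1}′) for k ≥ 1. Then for every k ≥ 0, τ_k is a nonzero polynomial associated to ∏ᵢ₌₁ʳ (X − rᵢ)^{max(mᵢ − k, 0)}. -/
/-!
Over a field of characteristic zero, differentiation lowers the multiplicity of every root by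
exactly one, and the multiplicity of a root in `gcd p q` is the minimum of its multiplicities in
`p` and `q`. Hence each step `τ ↦ gcd τ τ'` lowers every root multiplicity by one (stopping at
zero), and over `ℂ` a nonzero polynomial is determined up to a unit by its root multiplicities.
-/

open Polynomial

namespace Polynomial

variable {K : Type*} [Field K]

theorem rootMultiplicity_euclideanGcd [DecidableEq K] {p q : K[X]} (hp : p ≠ 0) (hq : q ≠ 0)
    (t : K) :
    (EuclideanDomain.gcd p q).rootMultiplicity t
      = min (p.rootMultiplicity t) (q.rootMultiplicity t) := by
  have hgcd : EuclideanDomain.gcd p q ≠ 0 := fun h => hp (EuclideanDomain.gcd_eq_zero_iff.mp h).1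
  refine le_antisymm (le_min ?_ ?_) ?_
  · exact rootMultiplicity_le_rootMultiplicity_of_dvd hp (EuclideanDomain.gcd_dvd_left p q) t
  · exact rootMultiplicity_le_rootMultiplicity_of_dvd hq (EuclideanDomain.gcd_dvd_right p q) t
  · rw [le_rootMultiplicity_iff hgcd]
    exact EuclideanDomain.dvd_gcd
      ((pow_dvd_pow _ (min_le_left _ _)).trans (pow_rootMultiplicity_dvd p t))
      ((pow_dvd_pow _ (min_le_right _ _)).trans (pow_rootMultiplicity_dvd q t))

theorem rootMultiplicity_euclideanGcd_derivative [DecidableEq K] [CharZero K] {p : K[X]}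
    (hp : p ≠ 0) (t : K) :
    (EuclideanDomain.gcd p (derivative p)).rootMultiplicity t = p.rootMultiplicity t - 1 := by
  by_cases hp' : derivative p = 0
  · rw [hp', EuclideanDomain.gcd_zero_right, eq_C_of_natDegree_eq_zero
      (derivative_eq_zero.mp hp'), rootMultiplicity_C]
  rw [rootMultiplicity_euclideanGcd hp hp' t]
  by_cases ht : p.IsRoot t
  · rw [derivative_rootMultiplicity_of_root ht]
    exact min_eq_right (Nat.sub_le _ _)
  · rw [rootMultiplicity_eq_zero ht]
    exact Nat.zero_min _

theorem rootMultiplicity_iterate_euclideanGcd_derivative [DecidableEq K] [CharZero K]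
    {τ : ℕ → K[X]} (hτ : ∀ k, τ (k + 1) = EuclideanDomain.gcd (τ k) (derivative (τ k)))
    (h0 : τ 0 ≠ 0) (k : ℕ) :
    τ k ≠ 0 ∧ ∀ t, (τ k).rootMultiplicity t = (τ 0).rootMultiplicity t - k := by
  induction k with
  | zero => exact ⟨h0, fun t => rfl⟩
  | succ k ih =>
    obtain ⟨hk, hmult⟩ := ih
    refine ⟨?_, fun t => ?_⟩
    · rw [hτ k]
      exact fun h => hk (EuclideanDomain.gcd_eq_zero_iff.mp h).1
    · rw [hτ k, rootMultiplicity_euclideanGcd_derivative hk, hmult, Nat.sub_sub]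

theorem associated_of_rootMultiplicity_eq [IsAlgClosed K] {p q : K[X]} (hp : p ≠ 0) (hq : q ≠ 0)
    (h : ∀ t, p.rootMultiplicity t = q.rootMultiplicity t) : Associated p q := by
  classical
  have hroots : p.roots = q.roots := Multiset.ext.mpr fun t => by rw [count_roots, count_roots, h]
  exact associated_of_dvd_dvd ((IsAlgClosed.splits p).dvd_of_roots_le_roots hp hroots.le)
    ((IsAlgClosed.splits q).dvd_of_roots_le_roots hq hroots.ge)

theorem prod_X_sub_C_pow_ne_zero {ι : Type*} (s : Finset ι) (r : ι → K) (e : ι → ℕ) :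
    ∏ i ∈ s, (X - C (r i)) ^ e i ≠ 0 :=
  Finset.prod_ne_zero_iff.mpr fun _ _ => pow_ne_zero _ (X_sub_C_ne_zero _)

theorem rootMultiplicity_prod_X_sub_C_pow [DecidableEq K] {ι : Type*} (s : Finset ι)
    (r : ι → K) (e : ι → ℕ) (t : K) :
    (∏ i ∈ s, (X - C (r i)) ^ e i).rootMultiplicity t = ∑ i ∈ s with r i = t, e i := by
  rw [← count_roots, roots_prod _ _ (prod_X_sub_C_pow_ne_zero s r e)]
  simp [Multiset.count_bind, Multiset.count_singleton, Finset.sum_filter, eq_comm]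

theorem rootMultiplicity_prod_X_sub_C_pow_tsub {ι : Type*} [Fintype ι] {r : ι → K}
    (hr : Function.Injective r) (e : ι → ℕ) (k : ℕ) (t : K) :
    (∏ i, (X - C (r i)) ^ (e i - k)).rootMultiplicity t
      = (∏ i, (X - C (r i)) ^ e i).rootMultiplicity t - k := by
  classical
  simp only [rootMultiplicity_prod_X_sub_C_pow]
  by_cases ht : ∃ j, r j = t
  · obtain ⟨j, rfl⟩ := ht
    simp [hr.eq_iff, Finset.sum_filter]
  · simp [not_exists.mp ht]

end Polynomial

theorem iterated_gcd_sequence_of_factored_general (P : Polynomial ℂ) (c : ℂ) (n : ℕ)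
    (r : Fin n → ℂ) (m : Fin n → ℕ) (hc : c ≠ 0) (hr : Function.Injective r)
    (hP : P = Polynomial.C c * ∏ i, (X - Polynomial.C (r i)) ^ m i)
    (τ : ℕ → Polynomial ℂ) (hτ0 : τ 0 = P)
    (hτ : ∀ k, τ (k + 1) = EuclideanDomain.gcd (τ k) (Polynomial.derivative (τ k))) :
    ∀ k, τ k ≠ 0 ∧ Associated (τ k) (∏ i, (X - Polynomial.C (r i)) ^ (m i - k)) := by
  have hcQ : C c * ∏ i, (X - C (r i)) ^ m i ≠ 0 :=
    mul_ne_zero (C_ne_zero.mpr hc) (prod_X_sub_C_pow_ne_zero _ r m)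
  intro k
  obtain ⟨hk, hk_mult⟩ :=
    rootMultiplicity_iterate_euclideanGcd_derivative hτ (by rwa [hτ0, hP]) k
  refine ⟨hk, associated_of_rootMultiplicity_eq hk (prod_X_sub_C_pow_ne_zero _ r _) fun t => ?_⟩
  rw [hk_mult, hτ0, hP, rootMultiplicity_mul hcQ, rootMultiplicity_C, zero_add,
    rootMultiplicity_prod_X_sub_C_pow_tsub hr]

theorem iterated_gcd_sequence_of_factored (P : Polynomial ℂ) (c : ℂ) (n : ℕ)
    (r : Fin n → ℂ) (m : Fin n → ℕ) (hc : c ≠ 0) (hr : Function.Injective r)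
    (hm : ∀ i, 1 ≤ m i)
    (hP : P = Polynomial.C c * ∏ i, (X - Polynomial.C (r i)) ^ m i)
    (hdeg : 0 < P.degree)
    (τ : ℕ → Polynomial ℂ) (hτ0 : τ 0 = P)
    (hτ : ∀ k, τ (k + 1) = EuclideanDomain.gcd (τ k) (Polynomial.derivative (τ k))) :
    ∀ k, τ k ≠ 0 ∧ Associated (τ k) (∏ i, (X - Polynomial.C (r i)) ^ (m i - k)) :=
  iterated_gcd_sequence_of_factored_general P c n r m hc hr hP τ hτ0 hτ
end

section
/- Let P be a nonconstant polynomial over ℂ with factorization P = C·∏ᵢ₌₁ʳ (X − rᵢ)^{mᵢ}, where C ≠ 0, the rᵢ are pairwise distinct and mᵢ ≥ 1, and suppose there are exactly two indices j ≠ k with m_j = m_k = m, m ≥ 2, and m > mᵢ for all i ∉ {j, k}. Define τ₀ = P and τ_l = gcd(τ_{l−1}, τ_{l−1}′) for l ≥ 1. Then τ_{m − 1} has degree 2 and its roots are exactly r_j and r_k; consequently r_j and r_k are obtained from the coefficients of τ_{m−1} by the quadratic formula. -/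
open Polynomial

private lemma gcd_assoc_congr {a b a' b' : Polynomial ℂ} (h : Associated a a')
    (h' : Associated b b') :
    Associated (EuclideanDomain.gcd a b) (EuclideanDomain.gcd a' b') :=
  associated_of_dvd_dvd
    (EuclideanDomain.dvd_gcd ((EuclideanDomain.gcd_dvd_left a b).trans h.dvd)
      ((EuclideanDomain.gcd_dvd_right a b).trans h'.dvd))
    (EuclideanDomain.dvd_gcd ((EuclideanDomain.gcd_dvd_left a' b').trans h.symm.dvd)
      ((EuclideanDomain.gcd_dvd_right a' b').trans h'.symm.dvd))

private lemma rootMult_prod {n : ℕ} {r : Fin n → ℂ} (hr : Function.Injective r)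
    (e : Fin n → ℕ) (i : Fin n) :
    rootMultiplicity (r i) (∏ j, (X - C (r j)) ^ e j) = e i := by
  classical
  have h0 : (∏ j, (X - C (r j)) ^ e j) ≠ 0 :=
    (monic_prod_of_monic _ _ fun j _ => (monic_X_sub_C _).pow _).ne_zero
  rw [← count_roots, roots_prod _ _ h0]
  simp only [roots_pow, roots_X_sub_C, Multiset.count_bind]
  rw [show (Finset.univ.val.map fun j => Multiset.count (r i) (e j • {r j}))
      = Finset.univ.val.map fun j => if j = i then e j else 0 from ?_]
  · rw [Finset.sum_map_val, Finset.sum_ite_eq' Finset.univ i fun j => e j]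
    simp
  · congr 1; funext j
    by_cases hji : j = i
    · subst hji; simp
    · have : r i ≠ r j := fun hh => hji (hr hh.symm)
      simp [Multiset.count_singleton, this, hji]

private lemma key_gcd {n : ℕ} {r : Fin n → ℂ} (hr : Function.Injective r) (e : Fin n → ℕ) :
    Associated
      (EuclideanDomain.gcd (∏ i, (X - C (r i)) ^ e i)
        (derivative (∏ i, (X - C (r i)) ^ e i)))
      (∏ i, (X - C (r i)) ^ (e i - 1)) := by
  classical
  set Q : Polynomial ℂ := ∏ i, (X - C (r i)) ^ e i with hQdef
  set D : Polynomial ℂ := ∏ i, (X - C (r i)) ^ (e i - 1) with hDdef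
  have hQmonic : Q.Monic := monic_prod_of_monic _ _ fun j _ => (monic_X_sub_C _).pow _
  have hDmonic : D.Monic := monic_prod_of_monic _ _ fun j _ => (monic_X_sub_C _).pow _
  have hQ0 : Q ≠ 0 := hQmonic.ne_zero
  by_cases htriv : ∀ i, e i = 0
  · have hQ1 : Q = 1 := by
      rw [hQdef]; apply Finset.prod_eq_one; intro i _; rw [htriv i, pow_zero]
    have hD1 : D = 1 := by
      rw [hDdef]; apply Finset.prod_eq_one; intro i _; rw [htriv i]; simp
    rw [hD1]
    rw [associated_one_iff_isUnit]
    exact isUnit_of_dvd_one (by rw [← hQ1]; exact EuclideanDomain.gcd_dvd_left _ _)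
  push_neg at htriv
  obtain ⟨i0, hi0⟩ := htriv
  have hmultQ : ∀ i, rootMultiplicity (r i) Q = e i := fun i => rootMult_prod hr e i
  have hmultD : ∀ i, rootMultiplicity (r i) D = e i - 1 := fun i => rootMult_prod hr _ i
  -- derivative nonzero
  have hdQ : derivative Q ≠ 0 := by
    intro h
    have := natDegree_eq_zero_of_derivative_eq_zero h
    have hdeg : Q.natDegree = ∑ i, e i := by
      rw [hQdef, natDegree_prod _ _ (fun i _ => pow_ne_zero _ (X_sub_C_ne_zero _))]
      simp [natDegree_pow]
    rw [hdeg] at this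
    exact hi0 ((Finset.sum_eq_zero_iff.mp this) i0 (Finset.mem_univ i0))
  -- multiplicities in the derivative
  have hmultQ' : ∀ i, 1 ≤ e i → rootMultiplicity (r i) (derivative Q) = e i - 1 := by
    intro i hi
    have hroot : Q.IsRoot (r i) := by
      rw [← rootMultiplicity_pos hQ0, hmultQ i]; omega
    rw [derivative_rootMultiplicity_of_root hroot, hmultQ i]
  -- D divides Q
  have hDQ : D ∣ Q :=
    Finset.prod_dvd_prod_of_dvd _ _ fun i _ => pow_dvd_pow _ (Nat.sub_le _ _)
  -- D divides Q'
  have hDQ' : D ∣ derivative Q := by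
    apply Finset.prod_dvd_of_coprime
    · intro a _ b _ hab
      exact ((pairwise_coprime_X_sub_C hr) hab).pow
    · intro i _
      by_cases hi : 1 ≤ e i
      · rw [← hmultQ' i hi]
        exact pow_rootMultiplicity_dvd _ _
      · have : e i - 1 = 0 := by omega
        rw [this, pow_zero]; exact one_dvd _
  set g : Polynomial ℂ := EuclideanDomain.gcd Q (derivative Q) with hgdef
  have hg0 : g ≠ 0 := by
    intro h
    rw [hgdef, EuclideanDomain.gcd_eq_zero_iff] at h
    exact hQ0 h.1
  have hgQ : g ∣ Q := EuclideanDomain.gcd_dvd_left _ _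
  have hgQ' : g ∣ derivative Q := EuclideanDomain.gcd_dvd_right _ _
  apply associated_of_dvd_dvd
  · -- g ∣ D
    apply (IsAlgClosed.splits (k := ℂ) g).dvd_of_roots_le_roots hg0
    rw [Multiset.le_iff_count]
    intro a
    by_cases ha : Multiset.count a g.roots = 0
    · omega
    have hag : a ∈ g.roots := Multiset.count_pos.mp (by omega)
    have haQ : Q.IsRoot a := by
      have := (mem_roots hQ0).mp (Multiset.mem_of_le (roots.le_of_dvd hQ0 hgQ) hag)
      exact this
    obtain ⟨i, hi⟩ : ∃ i, a = r i ∧ 1 ≤ e i := by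
      rw [IsRoot, hQdef, eval_prod, Finset.prod_eq_zero_iff] at haQ
      obtain ⟨i, _, hi⟩ := haQ
      simp only [eval_pow, eval_sub, eval_X, eval_C, pow_eq_zero_iff'] at hi
      exact ⟨i, sub_eq_zero.mp hi.1, by omega⟩
    obtain ⟨rfl, hei⟩ := hi
    have h1 : Multiset.count (r i) g.roots ≤ Multiset.count (r i) (derivative Q).roots :=
      Multiset.le_iff_count.mp (roots.le_of_dvd hdQ hgQ') _
    rw [count_roots, count_roots, hmultQ' i hei] at h1
    rw [count_roots, count_roots, hmultD i]
    exact h1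
  · exact EuclideanDomain.dvd_gcd hDQ hDQ'

theorem iterated_gcd_isolates_two_maximal_multiplicities (P : Polynomial ℂ) (c : ℂ)
    (n : ℕ) (r : Fin n → ℂ) (m : Fin n → ℕ) (hc : c ≠ 0) (hr : Function.Injective r)
    (hm : ∀ i, 1 ≤ m i)
    (hP : P = Polynomial.C c * ∏ i, (X - Polynomial.C (r i)) ^ m i)
    (hdeg : 0 < P.degree)
    (j k : Fin n) (hjk : j ≠ k) (hmm : m j = m k) (h2 : 2 ≤ m j)
    (hmax : ∀ i, i ≠ j → i ≠ k → m i < m j)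
    (τ : ℕ → Polynomial ℂ) (hτ0 : τ 0 = P)
    (hτ : ∀ l, τ (l + 1) = EuclideanDomain.gcd (τ l) (Polynomial.derivative (τ l))) :
    (τ (m j - 1)).degree = 2 ∧
      (∀ z : ℂ, (τ (m j - 1)).eval z = 0 ↔ z = r j ∨ z = r k) ∧
      r j + r k = -((τ (m j - 1)).coeff 1) / (τ (m j - 1)).coeff 2 ∧
      r j * r k = (τ (m j - 1)).coeff 0 / (τ (m j - 1)).coeff 2 := by
  classical
  -- invariant
  have hinv : ∀ l, Associated (τ l) (∏ i, (X - C (r i)) ^ (m i - l)) := by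
    intro l
    induction l with
    | zero =>
      rw [hτ0, hP]
      simp only [Nat.sub_zero]
      exact Associated.symm ⟨(isUnit_C.mpr hc.isUnit).unit, (mul_comm _ _)⟩
    | succ l ih =>
      rw [hτ l]
      have hder : Associated (derivative (τ l))
          (derivative (∏ i, (X - C (r i)) ^ (m i - l))) := by
        obtain ⟨u, hu⟩ := ih.symm
        obtain ⟨v, hv, hvu⟩ := Polynomial.isUnit_iff.mp u.isUnit
        rw [← hu, ← hvu, derivative_mul, derivative_C, mul_zero, add_zero]
        exact Associated.symm ⟨(isUnit_C.mpr hv).unit, by rw [IsUnit.unit_spec]⟩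
      have hstep := (gcd_assoc_congr ih hder).trans (key_gcd hr fun i => m i - l)
      have heq : (∏ i, (X - C (r i)) ^ (m i - l - 1))
          = ∏ i, (X - C (r i)) ^ (m i - (l + 1)) := by
        apply Finset.prod_congr rfl
        intro i _
        congr 1
      rw [heq] at hstep
      exact hstep
  -- the final stage
  have hfin := hinv (m j - 1)
  have hprod : (∏ i, (X - C (r i)) ^ (m i - (m j - 1)))
      = (X - C (r j)) * (X - C (r k)) := by
    rw [← Finset.prod_subset (Finset.subset_univ ({j, k} : Finset (Fin n)))]
    · rw [Finset.prod_pair hjk]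
      have h1 : m j - (m j - 1) = 1 := by omega
      have h2' : m k - (m j - 1) = 1 := by omega
      rw [h1, h2', pow_one, pow_one]
    · intro i _ hi
      simp only [Finset.mem_insert, Finset.mem_singleton, not_or] at hi
      have := hmax i hi.1 hi.2
      have : m i - (m j - 1) = 0 := by omega
      rw [this, pow_zero]
  rw [hprod] at hfin
  obtain ⟨u, hu⟩ := hfin.symm
  obtain ⟨v, hv, hvu⟩ := Polynomial.isUnit_iff.mp u.isUnit
  have hv0 : v ≠ 0 := hv.ne_zero
  have hT : τ (m j - 1) = C v * ((X - C (r j)) * (X - C (r k))) := by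
    rw [← hu, ← hvu, mul_comm]
  -- expand the quadratic
  have hexp : (X - C (r j)) * (X - C (r k))
      = X ^ 2 - C (r j + r k) * X + C (r j * r k) := by
    rw [C_add, C_mul]; ring
  have hc2 : (τ (m j - 1)).coeff 2 = v := by
    rw [hT, hexp]
    simp [coeff_C, coeff_X]
  have hc1 : (τ (m j - 1)).coeff 1 = -v * (r j + r k) := by
    rw [hT, hexp]
    simp [coeff_C, coeff_X]
    ring
  have hc0 : (τ (m j - 1)).coeff 0 = v * (r j * r k) := by
    rw [hT, hexp]
    simp [coeff_C, coeff_X]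
  refine ⟨?_, ?_, ?_, ?_⟩
  · rw [hT]
    rw [degree_C_mul hv0, degree_mul, degree_X_sub_C, degree_X_sub_C]
    rfl
  · intro z
    rw [hT]
    simp only [eval_mul, eval_C, eval_sub, eval_X, mul_eq_zero, sub_eq_zero]
    constructor
    · rintro (h | h | h)
      · exact absurd h hv0
      · exact Or.inl h
      · exact Or.inr h
    · rintro (h | h)
      · exact Or.inr (Or.inl h)
      · exact Or.inr (Or.inr h)
  · rw [hc1, hc2]
    field_simp
  · rw [hc0, hc2]
    field_simp
end

section
/- Let P : ℝ² → ℝ be a polynomial function and (α, β) ∈ ℝ² with P(α, β) = 0, ∂P/∂y(α, β) = 0 and ∂P/∂x(α, β) ≠ 0. Let Φ : ℝ → ℝ be a function twice differentiable at β with Φ(β) = α and P(Φ(y), y) = 0 for all y in some neighborhood of β. Then Φ″(β)·∂P/∂x(α, β) = −∂²P/∂y²(α, β); in particular Φ″(β) = −(∂²P/∂y²(α, β))/(∂P/∂x(α, β)). -/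
/-!
Differentiating `P(Φ y, y) = 0` gives `P_x(Φ y, y) Φ'(y) + P_y(Φ y, y) = 0` near `β`, which at the
ramification point forces `Φ'(β) = 0`. Differentiating this identity once more at `β`, every term
carrying a factor `Φ'(β)` vanishes, leaving `P_x(α, β) Φ''(β) + P_yy(α, β) = 0`.
-/

open MvPolynomial

namespace MvPolynomial

variable {𝕜 : Type*} [NontriviallyNormedField 𝕜]

theorem hasDerivAt_eval_comp {σ : Type*} [Fintype σ] (p : MvPolynomial σ 𝕜) {γ : 𝕜 → σ → 𝕜}
    {γ' : σ → 𝕜} {t : 𝕜} (hγ : ∀ i, HasDerivAt (fun s => γ s i) (γ' i) t) :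
    HasDerivAt (fun s => eval (γ s) p) (∑ i, eval (γ t) (pderiv i p) * γ' i) t := by
  classical
  induction p using MvPolynomial.induction_on with
  | C a => simpa using hasDerivAt_const t a
  | add p q hp hq =>
    simp only [map_add, add_mul, Finset.sum_add_distrib]
    exact hp.add hq
  | mul_X p i hp =>
    simp only [map_mul, eval_X, pderiv_mul, pderiv_X]
    refine (hp.mul (hγ i)).congr_deriv ?_
    simp [Pi.single_apply, mul_ite, apply_ite (eval (γ t)), ite_mul, add_mul,
      Finset.sum_add_distrib, Finset.sum_mul, mul_right_comm]

theorem hasDerivAt_eval_graph (p : MvPolynomial (Fin 2) 𝕜) {Φ : 𝕜 → 𝕜} {Φ' y : 𝕜}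
    (hΦ : HasDerivAt Φ Φ' y) :
    HasDerivAt (fun s => eval ![Φ s, s] p)
      (eval ![Φ y, y] (pderiv 0 p) * Φ' + eval ![Φ y, y] (pderiv 1 p)) y := by
  simpa using p.hasDerivAt_eval_comp (γ := fun s => ![Φ s, s]) (γ' := ![Φ', 1])
    (Fin.forall_fin_two.mpr ⟨hΦ, hasDerivAt_id y⟩)

theorem eventually_pderiv_mul_deriv_add_pderiv_eq_zero (p : MvPolynomial (Fin 2) 𝕜)
    {Φ : 𝕜 → 𝕜} {β : 𝕜} (hΦ : ∀ᶠ y in nhds β, DifferentiableAt 𝕜 Φ y)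
    (hloc : ∀ᶠ y in nhds β, eval ![Φ y, y] p = 0) :
    ∀ᶠ y in nhds β,
      eval ![Φ y, y] (pderiv 0 p) * deriv Φ y + eval ![Φ y, y] (pderiv 1 p) = 0 := by
  filter_upwards [hΦ, hloc.eventually_nhds] with y hΦy hlocy
  exact (p.hasDerivAt_eval_graph hΦy.hasDerivAt).unique
    ((hasDerivAt_const y 0).congr_of_eventuallyEq hlocy)

end MvPolynomial

theorem ramification_point_second_derivative_general (p : MvPolynomial (Fin 2) ℝ) (α β : ℝ)
    (hy : eval ![α, β] (pderiv 1 p) = 0)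
    (hx : eval ![α, β] (pderiv 0 p) ≠ 0)
    (Φ : ℝ → ℝ)
    (hΦ : ∀ᶠ y in nhds β, DifferentiableAt ℝ Φ y)
    (hΦ2 : DifferentiableAt ℝ (deriv Φ) β)
    (hΦβ : Φ β = α)
    (hloc : ∀ᶠ y in nhds β, eval ![Φ y, y] p = 0) :
    deriv (deriv Φ) β * eval ![α, β] (pderiv 0 p) =
        -(eval ![α, β] (pderiv 1 (pderiv 1 p))) ∧
      deriv (deriv Φ) β =
        -(eval ![α, β] (pderiv 1 (pderiv 1 p))) / eval ![α, β] (pderiv 0 p) := by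
  have himplicit := p.eventually_pderiv_mul_deriv_add_pderiv_eq_zero hΦ hloc
  have hΦ'β : deriv Φ β = 0 := by
    have h := himplicit.self_of_nhds
    rw [hΦβ, hy, add_zero] at h
    exact (mul_eq_zero.mp h).resolve_left hx
  have hΦd : HasDerivAt Φ 0 β := hΦ'β ▸ hΦ.self_of_nhds.hasDerivAt
  have hsecond := (((pderiv 0 p).hasDerivAt_eval_graph hΦd).mul hΦ2.hasDerivAt).add
    ((pderiv 1 p).hasDerivAt_eval_graph hΦd)
  have hsecond_zero := hsecond.unique ((hasDerivAt_const β 0).congr_of_eventuallyEq himplicit)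
  rw [hΦβ, hΦ'β] at hsecond_zero
  have hmul : deriv (deriv Φ) β * eval ![α, β] (pderiv 0 p) =
      -(eval ![α, β] (pderiv 1 (pderiv 1 p))) := by linarith
  exact ⟨hmul, eq_div_of_mul_eq hx hmul⟩

theorem ramification_point_second_derivative (p : MvPolynomial (Fin 2) ℝ) (α β : ℝ)
    (h0 : eval ![α, β] p = 0)
    (hy : eval ![α, β] (pderiv 1 p) = 0)
    (hx : eval ![α, β] (pderiv 0 p) ≠ 0)
    (Φ : ℝ → ℝ)
    (hΦ : ∀ᶠ y in nhds β, DifferentiableAt ℝ Φ y)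
    (hΦ2 : DifferentiableAt ℝ (deriv Φ) β)
    (hΦβ : Φ β = α)
    (hloc : ∀ᶠ y in nhds β, eval ![Φ y, y] p = 0) :
    deriv (deriv Φ) β * eval ![α, β] (pderiv 0 p) =
        -(eval ![α, β] (pderiv 1 (pderiv 1 p))) ∧
      deriv (deriv Φ) β =
        -(eval ![α, β] (pderiv 1 (pderiv 1 p))) / eval ![α, β] (pderiv 0 p) :=
  ramification_point_second_derivative_general p α β hy hx Φ hΦ hΦ2 hΦβ hloc
end

section
/- Let A and B be 4×4 real symmetric matrices defining ellipsoids, i.e., for M ∈ {A, B} the upper-left 3×3 block of M is positive definite and det M < 0; for such M let E_M = {x ∈ ℝ³ : (x,1)·M·(x,1)ᵀ ≤ 0} be the associated solid ellipsoid. Let f(λ) = det(λ·A + B). Then E_A and E_B are disjoint (the ellipsoids are separated) if and only if f has two distinct positive real roots, i.e., there exist λ₁, λ₂ with 0 < λ₁ < λ₂, f(λ₁) = 0 and f(λ₂) = 0. -/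
/-- A 4×4 real symmetric matrix defines an ellipsoid when its upper-left 3×3 block is
positive definite and its determinant is negative. -/
def IsEllipsoidMatrix (M : Matrix (Fin 4) (Fin 4) ℝ) : Prop :=
  M.IsSymm ∧ (Matrix.of fun i j : Fin 3 => M i.castSucc j.castSucc).PosDef ∧ M.det < 0

/-- The quadratic form `(x,1) · M · (x,1)ᵀ` associated to a 4×4 matrix `M`. -/
def ellipsoidQuadForm (M : Matrix (Fin 4) (Fin 4) ℝ) (x : Fin 3 → ℝ) : ℝ :=
  dotProduct ![x 0, x 1, x 2, 1] (M.mulVec ![x 0, x 1, x 2, 1])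

/-- The characteristic polynomial `f(λ) = det (λ A + B)` of the pencil of `A` and `B`. -/
noncomputable def pencilPoly (A B : Matrix (Fin 4) (Fin 4) ℝ) : Polynomial ℝ :=
  (Matrix.of fun i j =>
    Polynomial.C (A i j) * Polynomial.X + Polynomial.C (B i j)).det

/-!
For symmetric `M = [[P, v], [vᵀ, c]]` with `P` invertible, completing the square gives
`q_M (x) := (x,1) M (x,1)ᵀ = (x - z)ᵀ P (x - z) + s` with centre `z = -P⁻¹ v` and Schur complement
`s = c - vᵀ P⁻¹ v = det M / det P`; for `P > 0` the minimum of `q_M` is `s`, attained only at `z`.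

Along `N t = t A + (1 - t) B`, `det (N t) = (1 - t)⁴ f (t / (1 - t))`, so zeros of `s (N ·)` in
`(0, 1)` give positive roots of `f`. If `E_A ∩ E_B = ∅`, then `s (N t) > 0` for some `t ∈ (0, 1)`:
otherwise the centre of `N t`, moving from the centre of `B` (outside `E_A`) to that of `A`
(inside), crosses `∂E_A` at a point where `(1 - t) q_B = s (N t) ≤ 0`, a common point. Since
`s (N 0)` and `s (N 1)` are negative, `s (N ·)` vanishes on both sides of `t`.

Conversely, for a common point `x` and a root `λ > 0`, `q_{λA+B} (x) ≤ 0 = s (λA + B)`, so `x` is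
the centre of `λA + B` and `q_A (x) = 0`. The centre equation `(λ P_A + P_B) x = -(λ v_A + v_B)` is
affine in `λ`, so two roots make `x` the centre of `A`, where `q_A < 0`.
-/

open Matrix Set

open Polynomial in
lemma Polynomial.eval_det_C_mul_X_add_C {m R : Type*} [Fintype m] [DecidableEq m] [CommRing R]
    (A B : Matrix m m R) (t : R) :
    (Matrix.of fun i j => C (A i j) * X + C (B i j)).det.eval t = (t • A + B).det := by
  rw [← coe_evalRingHom, RingHom.map_det]
  congr 1
  ext i j
  simp only [RingHom.mapMatrix_apply, map_apply, of_apply, coe_evalRingHom, eval_add, eval_mul,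
    eval_C, eval_X, Matrix.add_apply, Matrix.smul_apply, smul_eq_mul, mul_comm]

theorem eq_zero_of_smul_add_eq_zero_of_ne {K V : Type*} [DivisionRing K] [AddCommGroup V]
    [Module K V] {a b : V} {l₁ l₂ : K} (hne : l₁ ≠ l₂) (h₁ : l₁ • a + b = 0)
    (h₂ : l₂ • a + b = 0) : a = 0 := by
  have h : (l₁ - l₂) • a = 0 := by rw [sub_smul, ← add_sub_add_right_eq_sub, h₁, h₂, sub_zero]
  exact (smul_eq_zero.1 h).resolve_left (sub_ne_zero.2 hne)

lemma Matrix.PosDef.convexComb {m : Type*} [Fintype m] {P Q : Matrix m m ℝ} (hP : P.PosDef)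
    (hQ : Q.PosDef) {t : ℝ} (ht : t ∈ Icc 0 1) : (t • P + (1 - t) • Q).PosDef := by
  rcases ht.2.eq_or_lt with rfl | ht1
  · simpa using hP
  · exact Matrix.PosDef.posSemidef_add (hP.posSemidef.smul ht.1) (hQ.smul (sub_pos.2 ht1))

namespace AffineQuadric

variable {n : ℕ} (M : Matrix (Fin (n + 1)) (Fin (n + 1)) ℝ)

def quadForm (x : Fin n → ℝ) : ℝ :=
  (Fin.snoc x 1 : Fin (n + 1) → ℝ) ⬝ᵥ M *ᵥ Fin.snoc x 1

def quadPart : Matrix (Fin n) (Fin n) ℝ := M.submatrix Fin.castSucc Fin.castSucc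

def linPart : Fin n → ℝ := fun i => M i.castSucc (Fin.last n)

def constPart : ℝ := M (Fin.last n) (Fin.last n)

noncomputable def center : Fin n → ℝ := -((quadPart M)⁻¹ *ᵥ linPart M)

noncomputable def schurComplement : ℝ :=
  constPart M - linPart M ⬝ᵥ (quadPart M)⁻¹ *ᵥ linPart M

def IsEllipsoid : Prop := M.IsSymm ∧ (quadPart M).PosDef ∧ M.det < 0

variable {M}

lemma quadForm_eq (hM : M.IsSymm) (x : Fin n → ℝ) :
    quadForm M x = x ⬝ᵥ quadPart M *ᵥ x + 2 * (linPart M ⬝ᵥ x) + constPart M := by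
  have hrow (i : Fin n) : M (Fin.last n) i.castSucc = M i.castSucc (Fin.last n) := hM.apply _ _
  simp only [quadForm, quadPart, linPart, constPart, dotProduct, mulVec, Fin.sum_univ_castSucc,
    Fin.snoc_castSucc, Fin.snoc_last, submatrix_apply, hrow, mul_add, mul_one, one_mul,
    Finset.sum_add_distrib, Finset.mul_sum, mul_comm (x _) (M _ _), two_mul]
  ring

lemma quadPart_isSymm (hM : M.IsSymm) : (quadPart M).IsSymm := hM.submatrix _

lemma mulVec_center (hP : IsUnit (quadPart M).det) : quadPart M *ᵥ center M = -linPart M := by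
  rw [center, mulVec_neg, mulVec_mulVec, mul_nonsing_inv _ hP, one_mulVec]

lemma center_eq_iff (hP : IsUnit (quadPart M).det) {x : Fin n → ℝ} :
    center M = x ↔ quadPart M *ᵥ x + linPart M = 0 := by
  constructor
  · rintro rfl; rw [mulVec_center hP, neg_add_cancel]
  · intro h
    have : Invertible (quadPart M) := invertibleOfIsUnitDet _ hP
    rw [center, neg_eq_iff_eq_neg]
    exact inv_mulVec_eq_vec (by rw [mulVec_neg, eq_neg_of_add_eq_zero_right h])

lemma quadForm_eq_center (hM : M.IsSymm) (hP : IsUnit (quadPart M).det) (x : Fin n → ℝ) :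
    quadForm M x = (x - center M) ⬝ᵥ quadPart M *ᵥ (x - center M) + schurComplement M := by
  have hswap : center M ⬝ᵥ quadPart M *ᵥ x = x ⬝ᵥ quadPart M *ᵥ center M := by
    rw [dotProduct_mulVec, ← mulVec_transpose, (quadPart_isSymm hM).eq, dotProduct_comm]
  rw [quadForm_eq hM, mulVec_sub, dotProduct_sub, sub_dotProduct, sub_dotProduct, hswap,
    mulVec_center hP, schurComplement, center]
  simp only [dotProduct_neg, dotProduct_comm _ (linPart M)]
  ring

lemma det_eq_det_quadPart_mul_schurComplement (hM : M.IsSymm) (hP : IsUnit (quadPart M).det) :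
    M.det = (quadPart M).det * schurComplement M := by
  have : Invertible (quadPart M) := invertibleOfIsUnitDet _ hP
  have hrow (i : Fin n) : M (Fin.last n) i.castSucc = M i.castSucc (Fin.last n) := hM.apply _ _
  have hcast (i : Fin n) : Fin.castAdd 1 i = i.castSucc := rfl
  have hlast : Fin.natAdd n (0 : Fin 1) = Fin.last n := rfl
  have hblocks : M.submatrix finSumFinEquiv finSumFinEquiv =
      fromBlocks (quadPart M) (replicateCol (Fin 1) (linPart M))
        (replicateRow (Fin 1) (linPart M)) (of fun _ _ => constPart M) := by
    ext (i | i) (j | j) <;>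
      simp [quadPart, linPart, constPart, hrow, hcast, hlast, Fin.fin_one_eq_zero]
  rw [← det_submatrix_equiv_self finSumFinEquiv, hblocks, det_fromBlocks₁₁, Matrix.mul_assoc,
    invOf_eq_nonsing_inv, ← replicateCol_mulVec, replicateRow_mul_replicateCol, det_fin_one,
    schurComplement]
  rfl

lemma schurComplement_le_quadForm (hM : M.IsSymm) (hP : (quadPart M).PosDef) (x : Fin n → ℝ) :
    schurComplement M ≤ quadForm M x := by
  have h := hP.posSemidef.dotProduct_mulVec_nonneg (x - center M)
  rw [star_trivial] at h
  rw [quadForm_eq_center hM hP.det_pos.ne'.isUnit]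
  linarith

lemma center_eq_of_quadForm_le (hM : M.IsSymm) (hP : (quadPart M).PosDef) {x : Fin n → ℝ}
    (h : quadForm M x ≤ schurComplement M) : center M = x := by
  by_contra hne
  have hpos := hP.dotProduct_mulVec_pos (sub_ne_zero.2 (Ne.symm hne))
  rw [star_trivial] at hpos
  rw [quadForm_eq_center hM hP.det_pos.ne'.isUnit] at h
  linarith

lemma quadForm_center (hM : M.IsSymm) (hP : IsUnit (quadPart M).det) :
    quadForm M (center M) = schurComplement M := by
  simp [quadForm_eq_center hM hP]

lemma IsEllipsoid.schurComplement_neg (h : IsEllipsoid M) : schurComplement M < 0 := by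
  obtain ⟨hM, hP, hdet⟩ := h
  rw [det_eq_det_quadPart_mul_schurComplement hM hP.det_pos.ne'.isUnit] at hdet
  exact neg_of_mul_neg_right hdet hP.det_pos.le

variable (M) (N : Matrix (Fin (n + 1)) (Fin (n + 1)) ℝ) (c : ℝ)

@[simp] lemma quadForm_add (x : Fin n → ℝ) : quadForm (M + N) x = quadForm M x + quadForm N x := by
  simp only [quadForm, add_mulVec, dotProduct_add]

@[simp] lemma quadForm_smul (x : Fin n → ℝ) : quadForm (c • M) x = c * quadForm M x := by
  simp only [quadForm, smul_mulVec, dotProduct_smul, smul_eq_mul]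

@[simp] lemma quadPart_add : quadPart (M + N) = quadPart M + quadPart N := rfl

@[simp] lemma quadPart_smul : quadPart (c • M) = c • quadPart M := rfl

@[simp] lemma linPart_add : linPart (M + N) = linPart M + linPart N := rfl

@[simp] lemma linPart_smul : linPart (c • M) = c • linPart M := rfl

section Continuity

lemma continuous_quadForm : Continuous (quadForm M) := by
  have h : Continuous fun x : Fin n → ℝ => (Fin.snoc x 1 : Fin (n + 1) → ℝ) :=
    continuous_id.finSnoc (A := fun _ => ℝ) continuous_const
  exact h.dotProduct (continuous_const.matrix_mulVec h)

variable {X : Type*} [TopologicalSpace X] {f : X → Matrix (Fin (n + 1)) (Fin (n + 1)) ℝ}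

lemma continuous_linPart (hf : Continuous f) : Continuous fun x => linPart (f x) :=
  continuous_pi fun _ => (continuous_apply_apply _ _).comp hf

lemma continuous_quadPart_inv (hf : Continuous f) (h : ∀ x, (quadPart (f x)).det ≠ 0) :
    Continuous fun x => (quadPart (f x))⁻¹ :=
  continuous_iff_continuousAt.2 fun x =>
    (continuousAt_matrix_inv _ (by rw [Ring.inverse_eq_inv']; exact continuousAt_inv₀ (h x))).comp
      (hf.matrix_submatrix _ _).continuousAt

lemma continuous_center (hf : Continuous f) (h : ∀ x, (quadPart (f x)).det ≠ 0) :
    Continuous fun x => center (f x) :=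
  ((continuous_quadPart_inv hf h).matrix_mulVec (continuous_linPart hf)).neg

lemma continuous_schurComplement (hf : Continuous f) (h : ∀ x, (quadPart (f x)).det ≠ 0) :
    Continuous fun x => schurComplement (f x) :=
  ((continuous_apply_apply _ _).comp hf).sub <| (continuous_linPart hf).dotProduct <|
    (continuous_quadPart_inv hf h).matrix_mulVec (continuous_linPart hf)

end Continuity

variable {A B : Matrix (Fin (n + 1)) (Fin (n + 1)) ℝ}

lemma continuous_segment :
    Continuous fun t : Icc (0 : ℝ) 1 => (t : ℝ) • A + (1 - (t : ℝ)) • B := by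
  fun_prop

lemma posDef_quadPart_segment (hA : (quadPart A).PosDef) (hB : (quadPart B).PosDef) {t : ℝ}
    (ht : t ∈ Icc 0 1) : (quadPart (t • A + (1 - t) • B)).PosDef := by
  simpa using hA.convexComb hB ht

lemma continuousOn_center_segment (hA : (quadPart A).PosDef) (hB : (quadPart B).PosDef) :
    ContinuousOn (fun t : ℝ => center (t • A + (1 - t) • B)) (Icc 0 1) :=
  continuousOn_iff_continuous_domRestrict.2 <| continuous_center continuous_segment fun t =>
    (posDef_quadPart_segment hA hB t.2).det_pos.ne'

lemma continuousOn_schurComplement_segment (hA : (quadPart A).PosDef)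
    (hB : (quadPart B).PosDef) :
    ContinuousOn (fun t : ℝ => schurComplement (t • A + (1 - t) • B)) (Icc 0 1) :=
  continuousOn_iff_continuous_domRestrict.2 <| continuous_schurComplement continuous_segment
    fun t => (posDef_quadPart_segment hA hB t.2).det_pos.ne'

theorem exists_schurComplement_segment_pos (hA : IsEllipsoid A) (hB : IsEllipsoid B)
    (hsep : ¬∃ x, quadForm A x ≤ 0 ∧ quadForm B x ≤ 0) :
    ∃ t ∈ Ioo (0 : ℝ) 1, 0 < schurComplement (t • A + (1 - t) • B) := by
  have hsA := hA.schurComplement_neg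
  have hsB := hB.schurComplement_neg
  obtain ⟨hAs, hAp, -⟩ := hA
  obtain ⟨hBs, hBp, -⟩ := hB
  by_contra! hle
  set a : ℝ → ℝ := fun t => quadForm A (center (t • A + (1 - t) • B))
  have ha0 : 0 < a 0 := by
    by_contra! h
    refine hsep ⟨center B, by simpa [a] using h, ?_⟩
    rw [quadForm_center hBs hBp.det_pos.ne'.isUnit]
    exact hsB.le
  have ha1 : a 1 < 0 := by
    simpa [a, quadForm_center hAs hAp.det_pos.ne'.isUnit] using hsA
  obtain ⟨t, ht, hat⟩ := intermediate_value_Ioo' zero_le_one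
    ((continuous_quadForm A).comp_continuousOn (continuousOn_center_segment hAp hBp))
    ⟨ha1, ha0⟩
  have hschur : schurComplement (t • A + (1 - t) • B) =
      (1 - t) * quadForm B (center (t • A + (1 - t) • B)) := by
    rw [← quadForm_center (hAs.smul t |>.add (hBs.smul _))
      (posDef_quadPart_segment hAp hBp (Ioo_subset_Icc_self ht)).det_pos.ne'.isUnit]
    simp only [quadForm_add, quadForm_smul]
    rw [show quadForm A _ = 0 from hat]
    ring
  refine hsep ⟨center (t • A + (1 - t) • B), (show quadForm A _ = 0 from hat).le, ?_⟩
  have := hle t ht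
  rw [hschur] at this
  exact nonpos_of_mul_nonpos_right this (by linarith [ht.2])

theorem exists_two_schurComplement_segment_eq_zero (hA : IsEllipsoid A) (hB : IsEllipsoid B)
    (hsep : ¬∃ x, quadForm A x ≤ 0 ∧ quadForm B x ≤ 0) :
    ∃ t₁ t₂ : ℝ, 0 < t₁ ∧ t₁ < t₂ ∧ t₂ < 1 ∧ schurComplement (t₁ • A + (1 - t₁) • B) = 0 ∧
      schurComplement (t₂ • A + (1 - t₂) • B) = 0 := by
  obtain ⟨t₀, ht₀, hpos⟩ := exists_schurComplement_segment_pos hA hB hsep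
  have hcont := continuousOn_schurComplement_segment hA.2.1 hB.2.1
  obtain ⟨t₁, ht₁, h₁⟩ := intermediate_value_Ioo ht₀.1.le
    (hcont.mono (Icc_subset_Icc_right ht₀.2.le))
    ⟨by simpa using hB.schurComplement_neg, hpos⟩
  obtain ⟨t₂, ht₂, h₂⟩ := intermediate_value_Ioo' ht₀.2.le
    (hcont.mono (Icc_subset_Icc_left ht₀.1.le))
    ⟨by simpa using hA.schurComplement_neg, hpos⟩
  exact ⟨t₁, t₂, ht₁.1, ht₁.2.trans ht₂.1, ht₂.2, h₁, h₂⟩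

lemma det_pencil_eq_zero_of_schurComplement_segment_eq_zero (hA : A.IsSymm) (hB : B.IsSymm)
    (hPA : (quadPart A).PosDef) (hPB : (quadPart B).PosDef) {t : ℝ} (ht : t ∈ Ico 0 1)
    (h : schurComplement (t • A + (1 - t) • B) = 0) : ((t / (1 - t)) • A + B).det = 0 := by
  have h1t : 1 - t ≠ 0 := (sub_pos.2 ht.2).ne'
  have hdet := det_eq_det_quadPart_mul_schurComplement ((hA.smul t).add (hB.smul (1 - t)))
    (posDef_quadPart_segment hPA hPB (Ico_subset_Icc_self ht)).det_pos.ne'.isUnit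
  have hseg : t • A + (1 - t) • B = (1 - t) • ((t / (1 - t)) • A + B) := by
    rw [smul_add, smul_smul, mul_div_cancel₀ t h1t]
  rw [h, mul_zero, hseg, det_smul] at hdet
  exact (mul_eq_zero.1 hdet).resolve_left (pow_ne_zero _ h1t)

theorem exists_two_pos_roots_of_separated (hA : IsEllipsoid A) (hB : IsEllipsoid B)
    (hsep : ¬∃ x, quadForm A x ≤ 0 ∧ quadForm B x ≤ 0) :
    ∃ l₁ l₂ : ℝ, 0 < l₁ ∧ l₁ < l₂ ∧ (l₁ • A + B).det = 0 ∧ (l₂ • A + B).det = 0 := by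
  obtain ⟨t₁, t₂, h0, h12, h1, h₁, h₂⟩ := exists_two_schurComplement_segment_eq_zero hA hB hsep
  refine ⟨t₁ / (1 - t₁), t₂ / (1 - t₂), div_pos h0 (by linarith), ?_,
    det_pencil_eq_zero_of_schurComplement_segment_eq_zero hA.1 hB.1 hA.2.1 hB.2.1
      ⟨h0.le, h12.trans h1⟩ h₁,
    det_pencil_eq_zero_of_schurComplement_segment_eq_zero hA.1 hB.1 hA.2.1 hB.2.1
      ⟨(h0.trans h12).le, h1⟩ h₂⟩
  rw [div_lt_div_iff₀ (by linarith) (by linarith)]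
  nlinarith

lemma posDef_quadPart_pencil (hPA : (quadPart A).PosDef) (hPB : (quadPart B).PosDef) {l : ℝ}
    (hl : 0 < l) : (quadPart (l • A + B)).PosDef := by
  simpa using (hPA.smul hl).add hPB

lemma quadForm_eq_zero_and_center_pencil_eq (hA : A.IsSymm) (hB : B.IsSymm)
    (hPA : (quadPart A).PosDef) (hPB : (quadPart B).PosDef) {l : ℝ} (hl : 0 < l)
    (hdet : (l • A + B).det = 0) {x : Fin n → ℝ} (hxA : quadForm A x ≤ 0)
    (hxB : quadForm B x ≤ 0) : quadForm A x = 0 ∧ center (l • A + B) = x := by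
  have hsym : (l • A + B).IsSymm := (hA.smul l).add hB
  have hP := posDef_quadPart_pencil hPA hPB hl
  have hschur : schurComplement (l • A + B) = 0 := by
    rw [det_eq_det_quadPart_mul_schurComplement hsym hP.det_pos.ne'.isUnit] at hdet
    exact (mul_eq_zero.1 hdet).resolve_left hP.det_pos.ne'
  have hq : quadForm (l • A + B) x = l * quadForm A x + quadForm B x := by simp
  have hmin := schurComplement_le_quadForm hsym hP x
  have hlA : l * quadForm A x ≤ 0 := mul_nonpos_of_nonneg_of_nonpos hl.le hxA
  refine ⟨?_, center_eq_of_quadForm_le hsym hP (by linarith)⟩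
  nlinarith

theorem not_exists_common_point_of_two_pos_roots (hA : IsEllipsoid A) (hB : B.IsSymm)
    (hPB : (quadPart B).PosDef) {l₁ l₂ : ℝ} (h0 : 0 < l₁) (h12 : l₁ < l₂)
    (h₁ : (l₁ • A + B).det = 0) (h₂ : (l₂ • A + B).det = 0) :
    ¬∃ x, quadForm A x ≤ 0 ∧ quadForm B x ≤ 0 := by
  rintro ⟨x, hxA, hxB⟩
  have hgrad {l : ℝ} (hl : 0 < l) (hc : center (l • A + B) = x) :
      l • (quadPart A *ᵥ x + linPart A) + (quadPart B *ᵥ x + linPart B) = 0 := by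
    rw [center_eq_iff (posDef_quadPart_pencil hA.2.1 hPB hl).det_pos.ne'.isUnit] at hc
    simp only [quadPart_add, quadPart_smul, linPart_add, linPart_smul, add_mulVec,
      smul_mulVec] at hc
    rw [← hc]
    module
  obtain ⟨hqA, hc₁⟩ := quadForm_eq_zero_and_center_pencil_eq hA.1 hB hA.2.1 hPB h0 h₁ hxA hxB
  obtain ⟨-, hc₂⟩ :=
    quadForm_eq_zero_and_center_pencil_eq hA.1 hB hA.2.1 hPB (h0.trans h12) h₂ hxA hxB
  have hcA : center A = x := (center_eq_iff hA.2.1.det_pos.ne'.isUnit).2 <|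
    eq_zero_of_smul_add_eq_zero_of_ne h12.ne (hgrad h0 hc₁) (hgrad (h0.trans h12) hc₂)
  have := hA.schurComplement_neg
  rw [← quadForm_center hA.1 hA.2.1.det_pos.ne'.isUnit, hcA] at this
  linarith

theorem separated_iff_exists_two_pos_roots (hA : IsEllipsoid A) (hB : IsEllipsoid B) :
    (¬∃ x, quadForm A x ≤ 0 ∧ quadForm B x ≤ 0) ↔
      ∃ l₁ l₂ : ℝ, 0 < l₁ ∧ l₁ < l₂ ∧ (l₁ • A + B).det = 0 ∧ (l₂ • A + B).det = 0 :=
  ⟨exists_two_pos_roots_of_separated hA hB, fun ⟨_, _, h0, h12, h₁, h₂⟩ =>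
    not_exists_common_point_of_two_pos_roots hA hB.1 hB.2.1 h0 h12 h₁ h₂⟩

end AffineQuadric

theorem ellipsoids_separated_iff_two_distinct_positive_roots
    (A B : Matrix (Fin 4) (Fin 4) ℝ)
    (hA : IsEllipsoidMatrix A) (hB : IsEllipsoidMatrix B) :
    (¬ ∃ x : Fin 3 → ℝ, ellipsoidQuadForm A x ≤ 0 ∧ ellipsoidQuadForm B x ≤ 0) ↔
      ∃ lam₁ lam₂ : ℝ, 0 < lam₁ ∧ lam₁ < lam₂ ∧
        (pencilPoly A B).eval lam₁ = 0 ∧ (pencilPoly A B).eval lam₂ = 0 := by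
  have hq (M : Matrix (Fin 4) (Fin 4) ℝ) : ellipsoidQuadForm M = AffineQuadric.quadForm M := by
    ext x
    have hx : ![x 0, x 1, x 2, 1] = (Fin.snoc x 1 : Fin 4 → ℝ) := by
      ext i
      fin_cases i <;> rfl
    rw [ellipsoidQuadForm, AffineQuadric.quadForm, hx]
  simp only [hq, pencilPoly, Polynomial.eval_det_C_mul_X_add_C]
  exact AffineQuadric.separated_iff_exists_two_pos_roots hA hB
end

section
/- Let A and B be 4×4 real symmetric matrices defining ellipsoids, i.e., for M ∈ {A, B} the upper-left 3×3 block of M is positive definite and det M < 0; for such M let E_M = {x ∈ ℝ³ : (x,1)·M·(x,1)ᵀ ≤ 0} be the associated solid ellipsoid. Let f(λ) = det(λ·A + B). Then the ellipsoids touch each other externally (the open interiors {x : (x,1)·A·(x,1)ᵀ < 0} and {x : (x,1)·B·(x,1)ᵀ < 0} are disjoint and E_A ∩ E_B consists of exactly one point) if and only if f has a positive real root of multiplicity at least 2. -/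
/-!
If `λ > 0` is a root of `f`, then `M = λA + B` is singular while its upper-left block `P` is
positive definite, so `M` kills a unique vector `(x₀, 1)` and
`λ q_A + q_B = (x - x₀)ᵀ P (x - x₀)` is nonnegative and vanishes only at `x₀`. Moving a basis
vector onto `(x₀, 1)` by a unimodular congruence turns the pencil into one whose constant term has
vanishing last row and column, which gives `f'(λ) = q_A(x₀) · det P`. Hence `λ` is a double root
exactly when `x₀` lies on both quadrics, and then the ellipsoids touch at `x₀` alone. Conversely,
at a touching point `x₀` both forms vanish and their gradients must point in opposite directions,
since otherwise some direction enters both interiors; this is the statement `(λA + B)(x₀, 1) = 0`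
for some `λ > 0`.
-/

open Matrix Polynomial Filter Topology

lemma Polynomial.two_le_rootMultiplicity_iff {R : Type*} [CommRing R] {p : R[X]} (hp : p ≠ 0)
    (r : R) :
    2 ≤ p.rootMultiplicity r ↔
      (p.comp (X + C r)).coeff 0 = 0 ∧ (p.comp (X + C r)).coeff 1 = 0 := by
  rw [rootMultiplicity_eq_rootMultiplicity,
    le_rootMultiplicity_iff (mt comp_X_add_C_eq_zero_iff.1 hp), C_0, sub_zero, X_pow_dvd_iff]
  refine ⟨fun h => ⟨h 0 two_pos, h 1 one_lt_two⟩, fun ⟨h₀, h₁⟩ d hd => ?_⟩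
  interval_cases d
  exacts [h₀, h₁]

namespace Matrix

variable {m n R : Type*} [CommRing R]

noncomputable def pencil (A B : Matrix m n R) : Matrix m n R[X] :=
  of fun i j => C (A i j) * X + C (B i j)

lemma pencil_eq_smul_add (A B : Matrix m n R) :
    pencil A B = (X : R[X]) • A.map C + B.map C := by
  ext i j
  simp [pencil, X_mul_C]

lemma pencil_map_evalRingHom (A B : Matrix m n R) (r : R) :
    (pencil A B).map (evalRingHom r) = r • A + B := by
  ext i j
  simp only [pencil, coe_evalRingHom, map_apply, of_apply, eval_add, eval_mul, eval_C, eval_X,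
    add_apply, smul_apply, smul_eq_mul, mul_comm]

lemma pencil_map_compRingHom (A B : Matrix m n R) (r : R) :
    (pencil A B).map (compRingHom (X + C r)) = pencil A (r • A + B) := by
  ext i j : 1
  simp only [pencil, coe_compRingHom, map_apply, of_apply, add_comp, mul_comp, C_comp, X_comp,
    add_apply, smul_apply, smul_eq_mul, C_add, C_mul]
  ring

lemma pencil_submatrix {l o : Type*} (A B : Matrix m n R) (f : l → m) (g : o → n) :
    (pencil A B).submatrix f g = pencil (A.submatrix f g) (B.submatrix f g) := rfl

variable [Fintype n]

lemma transpose_mul_pencil_mul (A B T : Matrix n n R) :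
    (T.map C)ᵀ * pencil A B * T.map C = pencil (Tᵀ * A * T) (Tᵀ * B * T) := by
  simp only [pencil_eq_smul_add, Matrix.mul_add, Matrix.add_mul, Matrix.mul_smul,
    Matrix.smul_mul, ← transpose_map, ← Matrix.map_mul]

variable [DecidableEq n]

lemma eval_det_pencil (A B : Matrix n n R) (r : R) :
    (pencil A B).det.eval r = (r • A + B).det := by
  rw [← coe_evalRingHom, RingHom.map_det, RingHom.mapMatrix_apply, pencil_map_evalRingHom]

lemma coeff_zero_det_pencil (A B : Matrix n n R) : (pencil A B).det.coeff 0 = B.det := by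
  rw [coeff_zero_eq_eval_zero, eval_det_pencil, zero_smul, zero_add]

lemma det_pencil_comp (A B : Matrix n n R) (r : R) :
    (pencil A B).det.comp (X + C r) = (pencil A (r • A + B)).det := by
  rw [← coe_compRingHom_apply, RingHom.map_det, RingHom.mapMatrix_apply, pencil_map_compRingHom]

lemma det_pencil_congr (A B T : Matrix n n R) (hT : T.det = 1) :
    (pencil (Tᵀ * A * T) (Tᵀ * B * T)).det = (pencil A B).det := by
  have hTC : (T.map C).det = 1 := by
    rw [← RingHom.mapMatrix_apply, ← RingHom.map_det, hT, map_one]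
  rw [← transpose_mul_pencil_mul, det_mul, det_mul, det_transpose, hTC, one_mul, mul_one]

variable {k : ℕ}

lemma coeff_one_det_pencil_of_last_eq_zero (A D : Matrix (Fin (k + 1)) (Fin (k + 1)) R)
    (hcol : ∀ i, D i (Fin.last k) = 0) (hrow : ∀ j, D (Fin.last k) j = 0) :
    (pencil A D).det.coeff 1 =
      A (Fin.last k) (Fin.last k) * (D.submatrix Fin.castSucc Fin.castSucc).det := by
  -- only the last row of the pencil involves `X`, and there it is `X` times a constant
  have hterm : ∀ j : Fin (k + 1), ((-1) ^ ((Fin.last k : ℕ) + (j : ℕ)) * pencil A D (Fin.last k) j *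
      ((pencil A D).submatrix (Fin.last k).succAbove j.succAbove).det).coeff 1 =
      (-1) ^ ((Fin.last k : ℕ) + (j : ℕ)) * A (Fin.last k) j *
        (D.submatrix Fin.castSucc j.succAbove).det := by
    intro j
    have hentry : pencil A D (Fin.last k) j = C (A (Fin.last k) j) * X := by
      simp [pencil, hrow]
    rw [hentry, pencil_submatrix, Fin.succAbove_last,
      show ∀ e q : R[X], e * (C (A (Fin.last k) j) * X) * q = X * (e * C (A (Fin.last k) j) * q)
        from fun _ _ => by ring,
      coeff_X_mul, mul_coeff_zero, mul_coeff_zero, coeff_zero_det_pencil, coeff_C_zero,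
      coeff_zero_eq_eval_zero]
    simp
  rw [det_succ_row _ (Fin.last k), finsetSum_coeff, Finset.sum_congr rfl fun j _ => hterm j,
    Finset.sum_eq_single (Fin.last k)]
  · simp [Fin.succAbove_last]
  · intro j _ hj
    obtain ⟨z, hz⟩ := Fin.exists_succAbove_eq hj.symm
    rw [det_eq_zero_of_column_eq_zero z fun i => by simp [hz, hcol], mul_zero]
  · simp

lemma coeff_one_det_pencil_of_mulVec_eq_zero (A B : Matrix (Fin (k + 1)) (Fin (k + 1)) R)
    (hB : B.IsSymm) {v : Fin (k + 1) → R} (hv : B *ᵥ v = 0) (hlast : v (Fin.last k) = 1) :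
    (pencil A B).det.coeff 1 = (v ⬝ᵥ A *ᵥ v) * (B.submatrix Fin.castSucc Fin.castSucc).det := by
  set T := (1 : Matrix (Fin (k + 1)) (Fin (k + 1)) R).updateCol (Fin.last k) v
  have hT : T.det = 1 := by
    rw [← cramer_apply, cramer_one]
    exact hlast
  have hcol : ∀ (M : Matrix (Fin (k + 1)) (Fin (k + 1)) R) i,
      (M * T) i (Fin.last k) = (M *ᵥ v) i := by
    intro M i
    simp [T, mul_updateCol]
  have hD : (Tᵀ * B * T).IsSymm := by
    simp [IsSymm, Matrix.mul_assoc, hB.eq]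
  rw [← det_pencil_congr A B T hT, coeff_one_det_pencil_of_last_eq_zero]
  · congr 1
    · rw [hcol, ← mulVec_mulVec, mulVec_transpose]
      simp [T, vecMul, dotProduct_comm]
    · congr 1
      have hcs : ∀ (M : Matrix (Fin (k + 1)) (Fin (k + 1)) R) a (j : Fin k),
          (M * T) a j.castSucc = M a j.castSucc := by
        intro M a j
        simp [T, mul_updateCol, Fin.castSucc_ne_last]
      ext i j
      rw [submatrix_apply, submatrix_apply, hcs, ← transpose_apply (Tᵀ * B), transpose_mul,
        transpose_transpose, hB.eq, hcs, hB.apply]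
  · intro i
    rw [hcol, ← mulVec_mulVec, hv, mulVec_zero, Pi.zero_apply]
  · intro j
    rw [← hD.apply, hcol, ← mulVec_mulVec, hv, mulVec_zero, Pi.zero_apply]

end Matrix

lemma exists_dotProduct_neg_of_not_antiparallel {ι : Type*} [Fintype ι] {a b : ι → ℝ}
    (ha : a ≠ 0) (hb : b ≠ 0) (h : ∀ r : ℝ, 0 < r → r • a + b ≠ 0) :
    ∃ d, d ⬝ᵥ a < 0 ∧ d ⬝ᵥ b < 0 := by
  have haa : 0 < a ⬝ᵥ a := by simpa using dotProduct_self_star_pos_iff.2 ha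
  have hbb : 0 < b ⬝ᵥ b := by simpa using dotProduct_self_star_pos_iff.2 hb
  set na := √(a ⬝ᵥ a)
  set nb := √(b ⬝ᵥ b)
  have hna : 0 < na := Real.sqrt_pos.2 haa
  have hnb : 0 < nb := Real.sqrt_pos.2 hbb
  have hna2 : a ⬝ᵥ a = na * na := (Real.mul_self_sqrt haa.le).symm
  have hnb2 : b ⬝ᵥ b = nb * nb := (Real.mul_self_sqrt hbb.le).symm
  -- `s` points along the bisector of `a` and `b`; `s ⬝ᵥ s = 2 ‖a‖ ‖b‖ K`, so `K > 0` unless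
  -- `a` and `b` are antiparallel, and then `-s` works
  set s := nb • a + na • b
  set K := na * nb + a ⬝ᵥ b
  have hsa : s ⬝ᵥ a = na * K := by
    simp only [s, K, add_dotProduct, smul_dotProduct, hna2, dotProduct_comm b a, smul_eq_mul]
    ring
  have hsb : s ⬝ᵥ b = nb * K := by
    simp only [s, K, add_dotProduct, smul_dotProduct, hnb2, smul_eq_mul]
    ring
  have hK : 0 < K := by
    by_contra hK
    have hss : s ⬝ᵥ s = 2 * na * nb * K := by
      calc s ⬝ᵥ s = s ⬝ᵥ (nb • a + na • b) := rfl
        _ = 2 * na * nb * K := by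
          rw [dotProduct_add, dotProduct_smul, dotProduct_smul, hsa, hsb, smul_eq_mul, smul_eq_mul]
          ring
    have hs : s = 0 := dotProduct_self_eq_zero.1 <| le_antisymm
      (hss ▸ mul_nonpos_of_nonneg_of_nonpos (by positivity) (not_lt.1 hK))
      (by simpa using dotProduct_self_star_nonneg s)
    refine h (nb / na) (div_pos hnb hna) ?_
    have hs' : na⁻¹ • s = (nb / na) • a + b := by
      simp only [s, smul_add, smul_smul, inv_mul_cancel₀ hna.ne', one_smul, div_eq_inv_mul]
    rw [← hs', hs, smul_zero]
  exact ⟨-s, by rw [neg_dotProduct, hsa]; nlinarith, by rw [neg_dotProduct, hsb]; nlinarith⟩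

lemma dotProduct_mulVec_add_smul {ι R : Type*} [Fintype ι] [CommRing R] {M : Matrix ι ι R}
    (hM : M.IsSymm) (u d : ι → R) (t : R) :
    (u + t • d) ⬝ᵥ M *ᵥ (u + t • d) =
      u ⬝ᵥ M *ᵥ u + 2 * t * (d ⬝ᵥ M *ᵥ u) + t ^ 2 * (d ⬝ᵥ M *ᵥ d) := by
  have hcomm : u ⬝ᵥ M *ᵥ d = d ⬝ᵥ M *ᵥ u := by
    rw [dotProduct_mulVec, ← mulVec_transpose, hM.eq, dotProduct_comm]
  simp only [mulVec_add, mulVec_smul, add_dotProduct, dotProduct_add, smul_dotProduct,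
    dotProduct_smul, hcomm, smul_eq_mul]
  ring

lemma eventually_add_mul_add_sq_neg {c p r : ℝ} (h : c < 0 ∨ c = 0 ∧ p < 0) :
    ∀ᶠ t in 𝓝[>] 0, c + 2 * t * p + t ^ 2 * r < 0 := by
  rcases h with hc | ⟨rfl, hp⟩
  · have hcont : Continuous fun t : ℝ => c + 2 * t * p + t ^ 2 * r := by fun_prop
    refine nhdsWithin_le_nhds (hcont.continuousAt.eventually_lt continuousAt_const ?_)
    simpa using hc
  · have hcont : Continuous fun t : ℝ => 2 * p + t * r := by fun_prop
    have hneg : ∀ᶠ t in 𝓝 0, 2 * p + t * r < 0 :=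
      hcont.continuousAt.eventually_lt continuousAt_const (by linarith)
    filter_upwards [nhdsWithin_le_nhds hneg, self_mem_nhdsWithin] with t ht (htpos : 0 < t)
    nlinarith

section Homogeneous

variable {n : ℕ}

def homog (x : Fin n → ℝ) : Fin (n + 1) → ℝ := Fin.snoc x 1

def affineQuad (M : Matrix (Fin (n + 1)) (Fin (n + 1)) ℝ) (x : Fin n → ℝ) : ℝ :=
  homog x ⬝ᵥ M *ᵥ homog x

lemma homog_ne_zero (x : Fin n → ℝ) : homog x ≠ 0 := fun h => by
  simpa [homog] using congrFun h (Fin.last n)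

lemma homog_add_smul (x w : Fin n → ℝ) (t : ℝ) :
    homog (x + t • w) = homog x + t • Fin.snoc w 0 := by
  ext i
  induction i using Fin.lastCases <;> simp [homog]

lemma snoc_init_sub_smul_eq_sub_smul_homog (x : Fin n → ℝ) (d : Fin (n + 1) → ℝ) :
    (Fin.snoc (Fin.init d - d (Fin.last n) • x) 0 : Fin (n + 1) → ℝ) =
      d - d (Fin.last n) • homog x := by
  ext i
  induction i using Fin.lastCases <;> simp [homog, Fin.init]

lemma affineQuad_smul_add (A B : Matrix (Fin (n + 1)) (Fin (n + 1)) ℝ) (r : ℝ) (x : Fin n → ℝ) :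
    affineQuad (r • A + B) x = r * affineQuad A x + affineQuad B x := by
  simp only [affineQuad, add_mulVec, smul_mulVec, dotProduct_add, dotProduct_smul, smul_eq_mul]

lemma mulVec_snoc_zero_castSucc (M : Matrix (Fin (n + 1)) (Fin (n + 1)) ℝ) (z : Fin n → ℝ)
    (i : Fin n) :
    (M *ᵥ Fin.snoc z 0) i.castSucc = (M.submatrix Fin.castSucc Fin.castSucc *ᵥ z) i := by
  simp [mulVec, dotProduct, Fin.sum_univ_castSucc]

lemma snoc_zero_dotProduct_mulVec (M : Matrix (Fin (n + 1)) (Fin (n + 1)) ℝ) (z : Fin n → ℝ) :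
    Fin.snoc z 0 ⬝ᵥ M *ᵥ Fin.snoc z 0 = z ⬝ᵥ M.submatrix Fin.castSucc Fin.castSucc *ᵥ z := by
  rw [dotProduct, Fin.sum_univ_castSucc]
  simp [mulVec_snoc_zero_castSucc, dotProduct]

variable {M : Matrix (Fin (n + 1)) (Fin (n + 1)) ℝ}

lemma affineQuad_add_smul (hM : M.IsSymm) (x w : Fin n → ℝ) (t : ℝ) :
    affineQuad M (x + t • w) = affineQuad M x + 2 * t * (Fin.snoc w 0 ⬝ᵥ M *ᵥ homog x) +
      t ^ 2 * (w ⬝ᵥ M.submatrix Fin.castSucc Fin.castSucc *ᵥ w) := by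
  rw [affineQuad, homog_add_smul, dotProduct_mulVec_add_smul hM, snoc_zero_dotProduct_mulVec,
    affineQuad]

lemma affineQuad_eq_of_mulVec_homog_eq_zero (hM : M.IsSymm) {x₀ : Fin n → ℝ}
    (h₀ : M *ᵥ homog x₀ = 0) (x : Fin n → ℝ) :
    affineQuad M x = (x - x₀) ⬝ᵥ M.submatrix Fin.castSucc Fin.castSucc *ᵥ (x - x₀) := by
  have hx : x = x₀ + (1 : ℝ) • (x - x₀) := by rw [one_smul, add_sub_cancel]
  rw [hx, affineQuad_add_smul hM, affineQuad, h₀, dotProduct_zero, dotProduct_zero, one_smul,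
    add_sub_cancel_left]
  ring

lemma exists_mulVec_homog_eq_zero (hP : (M.submatrix Fin.castSucc Fin.castSucc).det ≠ 0)
    (hM : M.det = 0) : ∃ x₀, M *ᵥ homog x₀ = 0 := by
  obtain ⟨y, hy, hMy⟩ := exists_mulVec_eq_zero_iff.2 hM
  have hlast : y (Fin.last n) ≠ 0 := by
    intro hlast
    refine hP (exists_mulVec_eq_zero_iff.1 ⟨Fin.init y, fun h => hy ?_, ?_⟩)
    · rw [← Fin.snoc_init_self y, h, hlast]
      ext i
      induction i using Fin.lastCases <;> simp
    · ext i
      rw [← mulVec_snoc_zero_castSucc, ← hlast, Fin.snoc_init_self, hMy, Pi.zero_apply,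
        Pi.zero_apply]
  refine ⟨(y (Fin.last n))⁻¹ • Fin.init y, ?_⟩
  have hhomog : homog ((y (Fin.last n))⁻¹ • Fin.init y) = (y (Fin.last n))⁻¹ • y := by
    ext i
    induction i using Fin.lastCases <;> simp [homog, Fin.init, hlast]
  rw [hhomog, mulVec_smul, hMy, smul_zero]

variable {A B : Matrix (Fin (n + 1)) (Fin (n + 1)) ℝ}

lemma mulVec_homog_ne_zero (hM : M.det ≠ 0) (x : Fin n → ℝ) : M *ᵥ homog x ≠ 0 :=
  fun h => hM (exists_mulVec_eq_zero_iff.1 ⟨_, homog_ne_zero x, h⟩)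

lemma two_le_rootMultiplicity_det_pencil_iff {r : ℝ}
    (hB : B.det ≠ 0) (hM : (r • A + B).IsSymm)
    (hP : ((r • A + B).submatrix Fin.castSucc Fin.castSucc).det ≠ 0) :
    2 ≤ (pencil A B).det.rootMultiplicity r ↔
      ∃ x₀, (r • A + B) *ᵥ homog x₀ = 0 ∧ affineQuad A x₀ = 0 := by
  have hne : (pencil A B).det ≠ 0 := fun h => hB (by rw [← coeff_zero_det_pencil A, h, coeff_zero])
  rw [two_le_rootMultiplicity_iff hne, det_pencil_comp, coeff_zero_det_pencil]
  constructor
  · rintro ⟨hdet, hcoeff⟩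
    obtain ⟨x₀, h₀⟩ := exists_mulVec_homog_eq_zero hP hdet
    rw [coeff_one_det_pencil_of_mulVec_eq_zero A _ hM h₀ (Fin.snoc_last _ _)] at hcoeff
    exact ⟨x₀, h₀, (mul_eq_zero.1 hcoeff).resolve_right hP⟩
  · rintro ⟨x₀, h₀, hA₀⟩
    refine ⟨exists_mulVec_eq_zero_iff.1 ⟨_, homog_ne_zero x₀, h₀⟩, ?_⟩
    rw [coeff_one_det_pencil_of_mulVec_eq_zero A _ hM h₀ (Fin.snoc_last _ _)]
    exact mul_eq_zero_of_left hA₀ _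

lemma eventually_affineQuad_neg (hM : M.IsSymm) {x₀ : Fin n → ℝ} (d : Fin (n + 1) → ℝ)
    (h : affineQuad M x₀ < 0 ∨ affineQuad M x₀ = 0 ∧ d ⬝ᵥ M *ᵥ homog x₀ < 0) :
    ∀ᶠ t in 𝓝[>] (0 : ℝ),
      affineQuad M (x₀ + t • (Fin.init d - d (Fin.last n) • x₀)) < 0 := by
  -- the direction `w` in the chart is the one with `(w, 0) = d - d_last • (x₀, 1)`
  have hslope : Fin.snoc (Fin.init d - d (Fin.last n) • x₀) 0 ⬝ᵥ M *ᵥ homog x₀ =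
      d ⬝ᵥ M *ᵥ homog x₀ - d (Fin.last n) * affineQuad M x₀ := by
    rw [snoc_init_sub_smul_eq_sub_smul_homog, sub_dotProduct, smul_dotProduct, affineQuad,
      smul_eq_mul]
  simp_rw [affineQuad_add_smul hM, hslope]
  refine eventually_add_mul_add_sq_neg (h.imp_right fun ⟨h₀, hd⟩ => ⟨h₀, ?_⟩)
  rwa [h₀, mul_zero, sub_zero]

lemma exists_affineQuad_neg (hA : A.IsSymm) (hB : B.IsSymm) {x₀ : Fin n → ℝ}
    (d : Fin (n + 1) → ℝ)
    (hdA : affineQuad A x₀ < 0 ∨ affineQuad A x₀ = 0 ∧ d ⬝ᵥ A *ᵥ homog x₀ < 0)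
    (hdB : affineQuad B x₀ < 0 ∨ affineQuad B x₀ = 0 ∧ d ⬝ᵥ B *ᵥ homog x₀ < 0) :
    ∃ x, affineQuad A x < 0 ∧ affineQuad B x < 0 :=
  let ⟨_, ht⟩ :=
    ((eventually_affineQuad_neg hA d hdA).and (eventually_affineQuad_neg hB d hdB)).exists
  ⟨_, ht⟩

lemma affineQuad_eq_zero_of_disjoint (hA : A.IsSymm) (hB : B.IsSymm) (hBdet : B.det ≠ 0)
    (hdisj : ¬∃ x, affineQuad A x < 0 ∧ affineQuad B x < 0) {x₀ : Fin n → ℝ}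
    (hA₀ : affineQuad A x₀ ≤ 0) (hB₀ : affineQuad B x₀ ≤ 0) : affineQuad A x₀ = 0 := by
  refine hA₀.eq_or_lt.resolve_right fun hAlt => ?_
  rcases hB₀.eq_or_lt with hBeq | hBlt
  · refine hdisj (exists_affineQuad_neg hA hB (-(B *ᵥ homog x₀)) (.inl hAlt) (.inr ⟨hBeq, ?_⟩))
    rw [neg_dotProduct, neg_neg_iff_pos]
    simpa using dotProduct_self_star_pos_iff.2 (mulVec_homog_ne_zero hBdet x₀)
  · exact hdisj ⟨x₀, hAlt, hBlt⟩

lemma exists_mulVec_homog_eq_zero_of_disjoint (hA : A.IsSymm) (hB : B.IsSymm)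
    (hAdet : A.det ≠ 0) (hBdet : B.det ≠ 0)
    (hdisj : ¬∃ x, affineQuad A x < 0 ∧ affineQuad B x < 0) {x₀ : Fin n → ℝ}
    (hA₀ : affineQuad A x₀ ≤ 0) (hB₀ : affineQuad B x₀ ≤ 0) :
    affineQuad A x₀ = 0 ∧ ∃ r : ℝ, 0 < r ∧ (r • A + B) *ᵥ homog x₀ = 0 := by
  have hAeq := affineQuad_eq_zero_of_disjoint hA hB hBdet hdisj hA₀ hB₀
  have hBeq := affineQuad_eq_zero_of_disjoint hB hA hAdet (fun ⟨x, hx⟩ => hdisj ⟨x, hx.symm⟩)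
    hB₀ hA₀
  refine ⟨hAeq, not_forall_not.1 fun hno => ?_⟩
  obtain ⟨d, hdA, hdB⟩ := exists_dotProduct_neg_of_not_antiparallel
    (mulVec_homog_ne_zero hAdet x₀) (mulVec_homog_ne_zero hBdet x₀)
    fun r hr h => hno r ⟨hr, by rw [add_mulVec, smul_mulVec, h]⟩
  exact hdisj (exists_affineQuad_neg hA hB d (.inr ⟨hAeq, hdA⟩) (.inr ⟨hBeq, hdB⟩))

lemma disjoint_and_existsUnique_of_mulVec_homog_eq_zero (hA : A.IsSymm) (hB : B.IsSymm)
    {r : ℝ} (hr : 0 < r) (hP : ((r • A + B).submatrix Fin.castSucc Fin.castSucc).PosDef)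
    {x₀ : Fin n → ℝ} (h₀ : (r • A + B) *ᵥ homog x₀ = 0) (hA₀ : affineQuad A x₀ = 0) :
    (¬∃ x, affineQuad A x < 0 ∧ affineQuad B x < 0) ∧
      ∃! x, affineQuad A x ≤ 0 ∧ affineQuad B x ≤ 0 := by
  have hM := affineQuad_eq_of_mulVec_homog_eq_zero ((hA.smul r).add hB) h₀
  simp only [affineQuad_smul_add] at hM
  have hnonneg : ∀ x, 0 ≤ r * affineQuad A x + affineQuad B x := fun x =>
    hM x ▸ hP.posSemidef.dotProduct_mulVec_nonneg _
  have hB₀ : affineQuad B x₀ = 0 := by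
    simpa [hA₀, sub_self] using hM x₀
  refine ⟨fun ⟨x, hAx, hBx⟩ => ?_, x₀, ⟨hA₀.le, hB₀.le⟩, fun x ⟨hAx, hBx⟩ => ?_⟩
  · nlinarith [hnonneg x]
  · have hzero : (x - x₀) ⬝ᵥ (r • A + B).submatrix Fin.castSucc Fin.castSucc *ᵥ (x - x₀) = 0 := by
      rw [← hM x]
      nlinarith [hnonneg x]
    by_contra hne
    exact (hP.dotProduct_mulVec_pos (sub_ne_zero.2 hne)).ne' (by simpa using hzero)

end Homogeneous

lemma ellipsoidQuadForm_eq_affineQuad (M : Matrix (Fin 4) (Fin 4) ℝ) :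
    ellipsoidQuadForm M = affineQuad M := by
  ext x
  have hx : ![x 0, x 1, x 2, 1] = homog x := by
    ext i
    fin_cases i <;> rfl
  rw [ellipsoidQuadForm, affineQuad, hx]

theorem ellipsoids_touch_externally_iff_positive_double_root
    (A B : Matrix (Fin 4) (Fin 4) ℝ)
    (hA : IsEllipsoidMatrix A) (hB : IsEllipsoidMatrix B) :
    ((¬ ∃ x : Fin 3 → ℝ, ellipsoidQuadForm A x < 0 ∧ ellipsoidQuadForm B x < 0) ∧
        (∃! x : Fin 3 → ℝ, ellipsoidQuadForm A x ≤ 0 ∧ ellipsoidQuadForm B x ≤ 0)) ↔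
      ∃ lam : ℝ, 0 < lam ∧ (pencilPoly A B).eval lam = 0 ∧
        2 ≤ (pencilPoly A B).rootMultiplicity lam := by
  obtain ⟨hAs, hAP, hAdet⟩ := hA
  obtain ⟨hBs, hBP, hBdet⟩ := hB
  have hP : ∀ lam : ℝ, 0 < lam →
      ((lam • A + B).submatrix Fin.castSucc Fin.castSucc).PosDef :=
    fun lam hlam => (hAP.smul hlam).add hBP
  have hroot : ∀ lam : ℝ, 0 < lam → (2 ≤ (pencilPoly A B).rootMultiplicity lam ↔
      ∃ x₀, (lam • A + B) *ᵥ homog x₀ = 0 ∧ affineQuad A x₀ = 0) := fun lam hlam =>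
    two_le_rootMultiplicity_det_pencil_iff hBdet.ne ((hAs.smul lam).add hBs)
      (hP lam hlam).det_pos.ne'
  simp only [ellipsoidQuadForm_eq_affineQuad]
  constructor
  · rintro ⟨hdisj, x₀, ⟨hA₀, hB₀⟩, -⟩
    obtain ⟨hA₀, lam, hlam, h₀⟩ :=
      exists_mulVec_homog_eq_zero_of_disjoint hAs hBs hAdet.ne hBdet.ne hdisj hA₀ hB₀
    refine ⟨lam, hlam, ?_, (hroot lam hlam).2 ⟨x₀, h₀, hA₀⟩⟩
    rw [pencilPoly, ← pencil, eval_det_pencil]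
    exact exists_mulVec_eq_zero_iff.1 ⟨_, homog_ne_zero x₀, h₀⟩
  · rintro ⟨lam, hlam, -, hmult⟩
    obtain ⟨x₀, h₀, hA₀⟩ := (hroot lam hlam).1 hmult
    exact disjoint_and_existsUnique_of_mulVec_homog_eq_zero hAs hBs hlam (hP lam hlam) h₀ hA₀
end
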